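/- Let a, b ∈ ℂ have strictly positive real parts and set c = conj(a), d = conj(b). Then ∫_{−∞}^{∞} φ(x; a, b, c, d) dx = 1, i.e. φ(·; a, b, conj(a), conj(b)) is a (real-valued, nonnegative) probability density on ℝ. -/

import Mathlib

open MeasureTheory Complex Real

/-- The continuous Hahn weight
`φ(x;a,b,c,d) = Γ(a+b+c+d)·Γ(a+ix)·Γ(b+ix)·Γ(c−ix)·Γ(d−ix)
  / [2π·Γ(a+c)·Γ(b+c)·Γ(a+d)·Γ(b+d)]`. -/
noncomputable def hahn (x : ℝ) (a b c d : ℂ) : ℂ :=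
  Complex.Gamma (a + b + c + d) *
    Complex.Gamma (a + Complex.I * x) * Complex.Gamma (b + Complex.I * x) *
    Complex.Gamma (c - Complex.I * x) * Complex.Gamma (d - Complex.I * x) /
  (2 * Real.pi * Complex.Gamma (a + c) * Complex.Gamma (b + c) *
    Complex.Gamma (a + d) * Complex.Gamma (b + d))

open Set
open scoped FourierTransform


namespace HahnW

/-- the kernel `e^{pt} (1+e^t)^{-(p+q)}` -/
noncomputable def ker (p q : ℂ) (t : ℝ) : ℂ :=
  Complex.exp (p * t) * ((1 + Real.exp t : ℝ) : ℂ) ^ (-(p + q))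

lemma one_add_exp_pos (t : ℝ) : (0:ℝ) < 1 + Real.exp t := by positivity

lemma ker_eq_exp (p q : ℂ) (t : ℝ) :
    ker p q t = Complex.exp (p * t - (p + q) * (Real.log (1 + Real.exp t) : ℂ)) := by
  have h0 : ((1 + Real.exp t : ℝ) : ℂ) ≠ 0 := by
    exact_mod_cast (one_add_exp_pos t).ne'
  rw [ker, Complex.cpow_def_of_ne_zero h0, ← Complex.ofReal_log (one_add_exp_pos t).le,
    ← Complex.exp_add]
  ring_nf

/-- logistic function -/
noncomputable def sig (t : ℝ) : ℝ := Real.exp t / (1 + Real.exp t)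

lemma sig_hasDerivAt (t : ℝ) :
    HasDerivAt sig (Real.exp t / (1 + Real.exp t) ^ 2) t := by
  have h := (Real.hasDerivAt_exp t).div ((hasDerivAt_const t 1).add (Real.hasDerivAt_exp t))
    (one_add_exp_pos t).ne'
  refine h.congr_deriv ?_
  simp only [Pi.add_apply]
  ring

lemma sig_mem_Ioo (t : ℝ) : sig t ∈ Ioo (0:ℝ) 1 := by
  constructor
  · exact div_pos (Real.exp_pos t) (one_add_exp_pos t)
  · rw [sig, div_lt_one (one_add_exp_pos t)]; linarith [Real.exp_pos t]

lemma sig_strictMono : StrictMono sig := by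
  intro s t hst
  have h1 := one_add_exp_pos s
  have h2 := one_add_exp_pos t
  rw [sig, sig, div_lt_div_iff₀ h1 h2]
  have := Real.exp_lt_exp.2 hst
  nlinarith

lemma sig_image : sig '' univ = Ioo (0:ℝ) 1 := by
  apply Subset.antisymm
  · rintro y ⟨t, -, rfl⟩; exact sig_mem_Ioo t
  · rintro y ⟨h0, h1⟩
    refine ⟨Real.log (y / (1 - y)), trivial, ?_⟩
    have h1' : 0 < 1 - y := by linarith
    have hyy : 0 < y / (1 - y) := div_pos h0 h1'
    rw [sig, Real.exp_log hyy]
    field_simp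
    ring

lemma one_sub_sig (t : ℝ) : 1 - sig t = 1 / (1 + Real.exp t) := by
  rw [sig]; field_simp; ring

/-- The central pointwise identity for the change of variables. -/
lemma key_identity (p q : ℂ) (x t : ℝ) :
    |Real.exp t / (1 + Real.exp t) ^ 2| •
      (((sig t : ℝ) : ℂ) ^ (p + Complex.I * x - 1) *
        (1 - ((sig t : ℝ) : ℂ)) ^ (q - Complex.I * x - 1)) =
    ker p q t * Complex.exp (Complex.I * x * t) := by
  have hA : (0:ℝ) < 1 + Real.exp t := one_add_exp_pos t
  have hs : (0:ℝ) < sig t := (sig_mem_Ioo t).1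
  have hs1 : (0:ℝ) < 1 - sig t := by linarith [(sig_mem_Ioo t).2]
  set L : ℝ := Real.log (1 + Real.exp t) with hL
  -- rewrite each cpow as a complex exponential
  have e1 : ((sig t : ℝ) : ℂ) ^ (p + Complex.I * x - 1)
      = Complex.exp ((p + Complex.I * x - 1) * ((t : ℂ) - (L : ℂ))) := by
    rw [Complex.cpow_def_of_ne_zero (by exact_mod_cast hs.ne'),
      ← Complex.ofReal_log hs.le]
    congr 1
    have : Real.log (sig t) = t - L := by
      rw [sig, Real.log_div (Real.exp_pos t).ne' hA.ne', Real.log_exp, hL]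
    rw [this]
    push_cast
    ring
  have e2 : (1 - ((sig t : ℝ) : ℂ)) ^ (q - Complex.I * x - 1)
      = Complex.exp ((q - Complex.I * x - 1) * (-(L : ℂ))) := by
    have : (1 - ((sig t : ℝ) : ℂ)) = ((1 - sig t : ℝ) : ℂ) := by push_cast; ring
    rw [this, Complex.cpow_def_of_ne_zero (by exact_mod_cast hs1.ne'),
      ← Complex.ofReal_log hs1.le]
    congr 1
    have : Real.log (1 - sig t) = -L := by
      rw [one_sub_sig, one_div, Real.log_inv, hL]
    rw [this]
    push_cast
    ring
  have e3 : |Real.exp t / (1 + Real.exp t) ^ 2| = Real.exp (t - 2 * L) := by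
    rw [abs_of_pos (by positivity), Real.exp_sub, two_mul, Real.exp_add, Real.exp_log hA]
    ring
  rw [e1, e2, e3, ker_eq_exp, Complex.real_smul, Complex.ofReal_exp, ← Complex.exp_add,
    ← Complex.exp_add, ← Complex.exp_add]
  congr 1
  push_cast
  ring

end HahnW

namespace HahnW

lemma sig_hasDerivWithinAt (t : ℝ) :
    HasDerivWithinAt sig (Real.exp t / (1 + Real.exp t) ^ 2) univ t :=
  (sig_hasDerivAt t).hasDerivWithinAt

/-- the beta integrand -/
noncomputable def bint (u v : ℂ) (y : ℝ) : ℂ := (y : ℂ) ^ (u - 1) * (1 - (y : ℂ)) ^ (v - 1)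

lemma integrableOn_bint {u v : ℂ} (hu : 0 < u.re) (hv : 0 < v.re) :
    IntegrableOn (bint u v) (Ioo (0:ℝ) 1) := by
  have h := (Complex.betaIntegral_convergent hu hv).1
  rw [← integrableOn_Ioc_iff_integrableOn_Ioo]
  exact h

lemma integrable_ker_mul_exp {p q : ℂ} (hp : 0 < p.re) (hq : 0 < q.re) (x : ℝ) :
    Integrable (fun t : ℝ => ker p q t * Complex.exp (Complex.I * x * t)) := by
  have hu : 0 < (p + Complex.I * x).re := by simpa using hp
  have hv : 0 < (q - Complex.I * x).re := by simpa using hq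
  have h := (integrableOn_image_iff_integrableOn_abs_deriv_smul MeasurableSet.univ
    (fun t _ => sig_hasDerivWithinAt t) (sig_strictMono.injective.injOn)
    (bint (p + Complex.I * x) (q - Complex.I * x))).1 (by rw [sig_image]; exact integrableOn_bint hu hv)
  rw [integrableOn_univ] at h
  refine h.congr (Filter.Eventually.of_forall fun t => ?_)
  simpa [bint] using key_identity p q x t

lemma integral_ker_mul_exp {p q : ℂ} (hp : 0 < p.re) (hq : 0 < q.re) (x : ℝ) :
    ∫ t : ℝ, ker p q t * Complex.exp (Complex.I * x * t) =
      Complex.Gamma (p + Complex.I * x) * Complex.Gamma (q - Complex.I * x) /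
        Complex.Gamma (p + q) := by
  have hu : 0 < (p + Complex.I * x).re := by simpa using hp
  have hv : 0 < (q - Complex.I * x).re := by simpa using hq
  have h := integral_image_eq_integral_abs_deriv_smul MeasurableSet.univ
    (fun t _ => sig_hasDerivWithinAt t) (sig_strictMono.injective.injOn)
    (bint (p + Complex.I * x) (q - Complex.I * x))
  rw [sig_image] at h
  have hbeta : ∫ y in Ioo (0:ℝ) 1, bint (p + Complex.I * x) (q - Complex.I * x) y =
      Complex.betaIntegral (p + Complex.I * x) (q - Complex.I * x) := by
    rw [Complex.betaIntegral, intervalIntegral.integral_of_le zero_le_one,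
      ← integral_Ioc_eq_integral_Ioo]
    rfl
  have hG := Complex.Gamma_mul_Gamma_eq_betaIntegral hu hv
  have hpq : p + Complex.I * x + (q - Complex.I * x) = p + q := by ring
  rw [hpq] at hG
  have hne : Complex.Gamma (p + q) ≠ 0 := by
    apply Complex.Gamma_ne_zero
    intro m hm
    have h1 : (p+q).re = (-(m:ℂ)).re := by rw [hm]
    have h2 : (0:ℝ) ≤ m := Nat.cast_nonneg m
    simp [Complex.add_re] at h1
    linarith
  have hval : ∫ t : ℝ, ker p q t * Complex.exp (Complex.I * x * t) =
      Complex.betaIntegral (p + Complex.I * x) (q - Complex.I * x) := by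
    rw [← hbeta, h, ← setIntegral_univ]
    refine setIntegral_congr_fun MeasurableSet.univ fun t _ => ?_
    exact (key_identity p q x t).symm
  rw [hval, hG]
  field_simp

end HahnW

namespace HahnW

lemma integrable_ker {p q : ℂ} (hp : 0 < p.re) (hq : 0 < q.re) :
    Integrable (ker p q) := by
  have := integrable_ker_mul_exp hp hq 0
  simpa using this

lemma integral_ker {p q : ℂ} (hp : 0 < p.re) (hq : 0 < q.re) :
    ∫ t : ℝ, ker p q t =
      Complex.Gamma p * Complex.Gamma q / Complex.Gamma (p + q) := by
  have := integral_ker_mul_exp hp hq 0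
  simpa using this

lemma continuous_ker (p q : ℂ) : Continuous (ker p q) := by
  have h1 : Continuous fun t : ℝ => Real.log (1 + Real.exp t) :=
    (continuous_const.add Real.continuous_exp).log fun x => (one_add_exp_pos x).ne'
  simp only [funext (ker_eq_exp p q)]
  exact Complex.continuous_exp.comp
    ((continuous_const.mul Complex.continuous_ofReal).sub
      (continuous_const.mul (Complex.continuous_ofReal.comp h1)))

lemma ker_succ (p q : ℂ) (t : ℝ) :
    ker (p + 1) q t = ker p q t * (Real.exp t / (1 + Real.exp t) : ℝ) := by
  have hA := one_add_exp_pos t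
  have h2 : ((Real.exp t / (1 + Real.exp t) : ℝ) : ℂ)
      = Complex.exp ((t : ℂ) - (Real.log (1 + Real.exp t) : ℝ)) := by
    rw [← Complex.ofReal_sub, ← Complex.ofReal_exp, Real.exp_sub, Real.exp_log hA]
  rw [ker_eq_exp, ker_eq_exp, h2, ← Complex.exp_add]
  congr 1
  push_cast
  ring

lemma hasDerivAt_ker (p q : ℂ) (t : ℝ) :
    HasDerivAt (ker p q) (p * ker p q t - (p + q) * ker (p + 1) q t) t := by
  have hA := one_add_exp_pos
  have hlog : HasDerivAt (fun t : ℝ => Real.log (1 + Real.exp t))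
      (Real.exp t / (1 + Real.exp t)) t :=
    by simpa using (((hasDerivAt_const t (1:ℝ)).add (Real.hasDerivAt_exp t)).log (hA t).ne')
  have hlogC : HasDerivAt (fun t : ℝ => ((Real.log (1 + Real.exp t) : ℝ) : ℂ))
      ((Real.exp t / (1 + Real.exp t) : ℝ) : ℂ) t := hlog.ofReal_comp
  have hin : HasDerivAt (fun t : ℝ => p * (t : ℂ) - (p + q) * ((Real.log (1 + Real.exp t) : ℝ) : ℂ))
      (p - (p + q) * ((Real.exp t / (1 + Real.exp t) : ℝ) : ℂ)) t := by
    have h1 : HasDerivAt (fun t : ℝ => p * (t : ℂ)) p t := by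
      simpa using (Complex.ofRealCLM.hasDerivAt (x := t)).const_mul p
    exact h1.sub (hlogC.const_mul (p + q))
  have := hin.cexp
  refine HasDerivAt.congr_deriv (this.congr_of_eventuallyEq
    (Filter.Eventually.of_forall fun s => (ker_eq_exp p q s))) ?_
  rw [← ker_eq_exp, ker_succ]
  push_cast
  ring

end HahnW

namespace HahnW

lemma differentiable_ker (p q : ℂ) : Differentiable ℝ (ker p q) :=
  fun t => (hasDerivAt_ker p q t).differentiableAt

lemma deriv_ker (p q : ℂ) :
    deriv (ker p q) = fun t => p * ker p q t - (p + q) * ker (p + 1) q t := by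
  funext t; exact (hasDerivAt_ker p q t).deriv

lemma integrable_deriv_ker {p q : ℂ} (hp : 0 < p.re) (hq : 0 < q.re) :
    Integrable (deriv (ker p q)) := by
  rw [deriv_ker]
  exact ((integrable_ker hp hq).const_mul p).sub
    ((integrable_ker (by simp; linarith) hq).const_mul (p + q))

/-- first derivative as a function: combination of kers -/
lemma hasDerivAt_deriv_ker (p q : ℂ) (t : ℝ) :
    HasDerivAt (deriv (ker p q))
      (p * (p * ker p q t - (p + q) * ker (p + 1) q t)
        - (p + q) * ((p+1) * ker (p+1) q t - (p + 1 + q) * ker (p + 2) q t)) t := by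
  rw [deriv_ker]
  have h1 := (hasDerivAt_ker p q t).const_mul p
  have h2 := (hasDerivAt_ker (p+1) q t).const_mul (p + q)
  have := h1.sub h2
  refine this.congr_deriv ?_
  ring_nf

lemma differentiable_deriv_ker (p q : ℂ) : Differentiable ℝ (deriv (ker p q)) :=
  fun t => (hasDerivAt_deriv_ker p q t).differentiableAt

lemma integrable_deriv_deriv_ker {p q : ℂ} (hp : 0 < p.re) (hq : 0 < q.re) :
    Integrable (deriv (deriv (ker p q))) := by
  have hd : deriv (deriv (ker p q)) = fun t =>
      p * (p * ker p q t - (p + q) * ker (p + 1) q t)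
        - (p + q) * ((p+1) * ker (p+1) q t - (p + 1 + q) * ker (p + 2) q t) := by
    funext t; exact (hasDerivAt_deriv_ker p q t).deriv
  rw [hd]
  have k0 := integrable_ker hp hq
  have k1 := integrable_ker (p := p + 1) (q := q) (by simp; linarith) hq
  have k2 := integrable_ker (p := p + 2) (q := q) (by simp; linarith) hq
  exact (((k0.const_mul p).sub (k1.const_mul (p+q))).const_mul p).sub
    ((((k1.const_mul (p+1)).sub (k2.const_mul (p+1+q))).const_mul (p+q)))

lemma fourier_ker_decay {p q : ℂ} (hp : 0 < p.re) (hq : 0 < q.re) :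
    ∃ C : ℝ, ∀ ξ : ℝ, ξ ^ 2 * ‖𝓕 (ker p q) ξ‖ ≤ C := by
  have h1 : 𝓕 (deriv (ker p q)) = fun ξ : ℝ => (2 * π * Complex.I * ξ) • 𝓕 (ker p q) ξ :=
    Real.fourier_deriv (integrable_ker hp hq) (differentiable_ker p q)
      (integrable_deriv_ker hp hq)
  have h2 : 𝓕 (deriv (deriv (ker p q)))
      = fun ξ : ℝ => (2 * π * Complex.I * ξ) • 𝓕 (deriv (ker p q)) ξ :=
    Real.fourier_deriv (integrable_deriv_ker hp hq) (differentiable_deriv_ker p q)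
      (integrable_deriv_deriv_ker hp hq)
  refine ⟨(∫ t, ‖deriv (deriv (ker p q)) t‖) / (4 * π ^ 2), fun ξ => ?_⟩
  have hb : ‖𝓕 (deriv (deriv (ker p q))) ξ‖ ≤ ∫ t, ‖deriv (deriv (ker p q)) t‖ :=
    VectorFourier.norm_fourierIntegral_le_integral_norm _ _ _ _ _
  rw [h2, h1] at hb
  have hπ : (0:ℝ) < 4 * π ^ 2 := by positivity
  rw [norm_smul, norm_smul] at hb
  have : ‖(2 * π * Complex.I * ξ : ℂ)‖ = 2 * π * |ξ| := by
    simp [map_mul, abs_of_pos Real.pi_pos]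
  rw [this] at hb
  rw [le_div_iff₀ hπ]
  have hsq : |ξ| * |ξ| = ξ ^ 2 := by rw [← abs_mul, ← sq, abs_sq]
  have heq : 2 * π * |ξ| * (2 * π * |ξ| * ‖𝓕 (ker p q) ξ‖)
      = ξ ^ 2 * ‖𝓕 (ker p q) ξ‖ * (4 * π ^ 2) := by rw [← hsq]; ring
  linarith

end HahnW

namespace HahnW

lemma continuous_fourier_ker (p q : ℂ) {f : ℝ → ℂ} (hf : Integrable f) :
    Continuous (𝓕 f) :=
  VectorFourier.fourierIntegral_continuous Real.continuous_fourierChar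
    (by exact continuous_inner) hf

lemma integrable_fourier_ker {p q : ℂ} (hp : 0 < p.re) (hq : 0 < q.re) :
    Integrable (𝓕 (ker p q)) := by
  obtain ⟨C, hC⟩ := fourier_ker_decay hp hq
  set C0 : ℝ := ∫ t, ‖ker p q t‖ with hC0
  have hbound : ∀ ξ : ℝ, ‖𝓕 (ker p q) ξ‖ ≤ (C0 + C) * (1 / (1 + ξ ^ 2)) := by
    intro ξ
    have h1 : ‖𝓕 (ker p q) ξ‖ ≤ C0 :=
      VectorFourier.norm_fourierIntegral_le_integral_norm _ _ _ _ _
    have h2 := hC ξ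
    have h3 : (0:ℝ) < 1 + ξ ^ 2 := by positivity
    rw [mul_one_div, le_div_iff₀ h3]
    have hF := norm_nonneg (𝓕 (ker p q) ξ)
    nlinarith [sq_nonneg ξ]
  have hint : Integrable fun ξ : ℝ => (C0 + C) * (1 / (1 + ξ ^ 2)) := by
    simpa [one_div] using (integrable_inv_one_add_sq).const_mul (C0 + C)
  refine Integrable.mono' hint
    (continuous_fourier_ker p q (integrable_ker hp hq)).aestronglyMeasurable
    (Filter.Eventually.of_forall hbound)

/-- multiplication formula on ℝ -/
lemma mult_formula {f g : ℝ → ℂ} (hf : Integrable f) (hg : Integrable g) :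
    ∫ ξ : ℝ, 𝓕 f ξ * g ξ = ∫ x : ℝ, f x * 𝓕 g x := by
  have hL : Continuous fun p : ℝ × ℝ => (innerₗ ℝ) p.1 p.2 := continuous_inner
  have hflip : (innerₗ ℝ).flip = innerₗ ℝ := by
    apply LinearMap.ext; intro x; apply LinearMap.ext; intro y
    simp [real_inner_comm]
  have := VectorFourier.integral_fourierIntegral_smul_eq_flip (F := ℂ)
    (L := innerₗ ℝ) Real.continuous_fourierChar hL hf hg
  rw [hflip] at this
  simp only [smul_eq_mul] at this
  exact this

/-- Fourier transform of `ker` in terms of Gamma. -/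
lemma fourier_ker {p q : ℂ} (hp : 0 < p.re) (hq : 0 < q.re) (ξ : ℝ) :
    𝓕 (ker p q) ξ =
      Complex.Gamma (p + Complex.I * ((-2 * π * ξ : ℝ) : ℂ)) *
        Complex.Gamma (q - Complex.I * ((-2 * π * ξ : ℝ) : ℂ)) / Complex.Gamma (p + q) := by
  rw [← integral_ker_mul_exp hp hq (-2 * π * ξ), Real.fourier_eq']
  congr 1
  funext t
  rw [smul_eq_mul, mul_comm]
  congr 1
  simp only [RCLike.inner_apply, conj_trivial]
  congr 1
  push_cast
  ring

end HahnW

namespace HahnW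

lemma Gamma_ne_zero_of_re_pos {z : ℂ} (hz : 0 < z.re) : Complex.Gamma z ≠ 0 := by
  apply Complex.Gamma_ne_zero
  intro m hm
  have h1 : z.re = (-(m:ℂ)).re := by rw [hm]
  have h2 : (0:ℝ) ≤ m := Nat.cast_nonneg m
  simp at h1
  linarith

lemma ker_neg (b : ℂ) (t : ℝ) :
    ker b (starRingEnd ℂ b) (-t) = ker (starRingEnd ℂ b) b t := by
  have hA := one_add_exp_pos t
  have hL : Real.log (1 + Real.exp (-t)) = Real.log (1 + Real.exp t) - t := by
    have : 1 + Real.exp (-t) = (1 + Real.exp t) * Real.exp (-t) := by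
      rw [add_mul, one_mul, ← Real.exp_add]
      simp [add_comm]
    rw [this, Real.log_mul hA.ne' (Real.exp_pos _).ne', Real.log_exp]
    ring
  rw [ker_eq_exp, ker_eq_exp, hL]
  congr 1
  push_cast
  ring

lemma ker_mul_ker (a b : ℂ) (t : ℝ) :
    ker a (starRingEnd ℂ a) t * ker (starRingEnd ℂ b) b t
      = ker (a + starRingEnd ℂ b) (starRingEnd ℂ a + b) t := by
  rw [ker_eq_exp, ker_eq_exp, ker_eq_exp, ← Complex.exp_add]
  congr 1
  ring

lemma parseval (a b : ℂ) (ha : 0 < a.re) (hb : 0 < b.re) :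
    ∫ ξ : ℝ, 𝓕 (ker a (starRingEnd ℂ a)) ξ * 𝓕 (ker b (starRingEnd ℂ b)) ξ
      = Complex.Gamma (a + starRingEnd ℂ b) * Complex.Gamma (starRingEnd ℂ a + b) /
          Complex.Gamma (a + starRingEnd ℂ b + (starRingEnd ℂ a + b)) := by
  have ha' : 0 < (starRingEnd ℂ a).re := by simpa using ha
  have hb' : 0 < (starRingEnd ℂ b).re := by simpa using hb
  have hf := integrable_ker ha ha'
  have hh := integrable_ker hb hb'
  have hFh := integrable_fourier_ker hb hb'
  rw [mult_formula hf hFh]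
  have hinv : ∀ t : ℝ, 𝓕 (𝓕 (ker b (starRingEnd ℂ b))) t = ker b (starRingEnd ℂ b) (-t) := by
    intro t
    have h1 : 𝓕⁻ (𝓕 (ker b (starRingEnd ℂ b))) = ker b (starRingEnd ℂ b) :=
      (continuous_ker _ _).fourierInv_fourier_eq hh hFh
    calc 𝓕 (𝓕 (ker b (starRingEnd ℂ b))) t
        = 𝓕⁻ (𝓕 (ker b (starRingEnd ℂ b))) (-t) := by
          rw [Real.fourierInv_eq_fourier_neg]; simp
      _ = ker b (starRingEnd ℂ b) (-t) := by rw [h1]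
  have hpt : ∀ t : ℝ, ker a (starRingEnd ℂ a) t * 𝓕 (𝓕 (ker b (starRingEnd ℂ b))) t
      = ker (a + starRingEnd ℂ b) (starRingEnd ℂ a + b) t := by
    intro t
    rw [hinv t, ker_neg, ker_mul_ker]
  rw [integral_congr_ae (Filter.Eventually.of_forall hpt)]
  exact integral_ker (by simp [Complex.add_re]; linarith [ha, hb]) (by simp [Complex.add_re]; linarith)

end HahnW

namespace HahnW

lemma fourier_ker_scaled {p q : ℂ} (hp : 0 < p.re) (hq : 0 < q.re) (x : ℝ) :
    𝓕 (ker p q) (-(1 / (2 * π)) * x) =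
      Complex.Gamma (p + Complex.I * x) * Complex.Gamma (q - Complex.I * x) /
        Complex.Gamma (p + q) := by
  have hx : -2 * π * (-(1 / (2 * π)) * x) = x := by
    field_simp
  rw [fourier_ker hp hq, hx]

lemma integral_gamma_prod (a b : ℂ) (ha : 0 < a.re) (hb : 0 < b.re) :
    ∫ x : ℝ, (Complex.Gamma (a + Complex.I * x) * Complex.Gamma (starRingEnd ℂ a - Complex.I * x)) *
        (Complex.Gamma (b + Complex.I * x) * Complex.Gamma (starRingEnd ℂ b - Complex.I * x))
      = Complex.Gamma (a + starRingEnd ℂ a) * Complex.Gamma (b + starRingEnd ℂ b) * (2 * π) *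
        (Complex.Gamma (a + starRingEnd ℂ b) * Complex.Gamma (starRingEnd ℂ a + b) /
          Complex.Gamma (a + starRingEnd ℂ b + (starRingEnd ℂ a + b))) := by
  have ha' : 0 < (starRingEnd ℂ a).re := by simpa using ha
  have hb' : 0 < (starRingEnd ℂ b).re := by simpa using hb
  have hGa : Complex.Gamma (a + starRingEnd ℂ a) ≠ 0 :=
    Gamma_ne_zero_of_re_pos (by simp [Complex.add_re]; linarith)
  have hGb : Complex.Gamma (b + starRingEnd ℂ b) ≠ 0 :=
    Gamma_ne_zero_of_re_pos (by simp [Complex.add_re]; linarith)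
  have hpt : ∀ x : ℝ,
      (Complex.Gamma (a + Complex.I * x) * Complex.Gamma (starRingEnd ℂ a - Complex.I * x)) *
        (Complex.Gamma (b + Complex.I * x) * Complex.Gamma (starRingEnd ℂ b - Complex.I * x))
      = (Complex.Gamma (a + starRingEnd ℂ a) * Complex.Gamma (b + starRingEnd ℂ b)) *
          ((fun ξ : ℝ => 𝓕 (ker a (starRingEnd ℂ a)) ξ * 𝓕 (ker b (starRingEnd ℂ b)) ξ)
            (-(1 / (2 * π)) * x)) := by
    intro x
    simp only
    rw [fourier_ker_scaled ha ha' x, fourier_ker_scaled hb hb' x]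
    field_simp
  rw [integral_congr_ae (Filter.Eventually.of_forall hpt), integral_const_mul,
    MeasureTheory.Measure.integral_comp_mul_left
      (fun ξ : ℝ => 𝓕 (ker a (starRingEnd ℂ a)) ξ * 𝓕 (ker b (starRingEnd ℂ b)) ξ)
      (-(1 / (2 * π))), parseval a b ha hb]
  have habs : |(-(1 / (2 * π)) : ℝ)⁻¹| = 2 * π := by
    rw [abs_inv, abs_neg, abs_of_pos (by positivity), one_div, inv_inv]
  rw [habs, Complex.real_smul]
  push_cast
  ring

end HahnW


namespace HahnW

lemma conj_arith (a : ℂ) (x : ℝ) :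
    starRingEnd ℂ a - Complex.I * x = starRingEnd ℂ (a + Complex.I * x) := by
  simp [map_add, map_mul, Complex.conj_I, Complex.conj_ofReal]
  ring

lemma hahn_eq_real (a b : ℂ) (ha : 0 < a.re) (hb : 0 < b.re) (x : ℝ) :
    hahn x a b (starRingEnd ℂ a) (starRingEnd ℂ b) =
      Complex.ofReal ((Real.Gamma (2 * (a.re + b.re)) * Complex.normSq (Complex.Gamma (a + Complex.I * x)) *
          Complex.normSq (Complex.Gamma (b + Complex.I * x))) /
        (2 * π * Real.Gamma (2 * a.re) *
          Complex.normSq (Complex.Gamma (b + starRingEnd ℂ a)) * Real.Gamma (2 * b.re))) := by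
  have e1 : Complex.Gamma (starRingEnd ℂ a - Complex.I * x)
      = starRingEnd ℂ (Complex.Gamma (a + Complex.I * x)) := by
    rw [conj_arith, Complex.Gamma_conj]
  have e2 : Complex.Gamma (starRingEnd ℂ b - Complex.I * x)
      = starRingEnd ℂ (Complex.Gamma (b + Complex.I * x)) := by
    rw [conj_arith, Complex.Gamma_conj]
  have e3 : Complex.Gamma (a + starRingEnd ℂ b)
      = starRingEnd ℂ (Complex.Gamma (b + starRingEnd ℂ a)) := by
    rw [← Complex.Gamma_conj]
    congr 1
    simp [map_add]
    ring
  have e4 : a + b + starRingEnd ℂ a + starRingEnd ℂ b = ((2 * (a.re + b.re) : ℝ) : ℂ) := by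
    apply Complex.ext <;> simp [Complex.add_re, Complex.add_im] <;> ring
  have e5 : a + starRingEnd ℂ a = ((2 * a.re : ℝ) : ℂ) := by
    apply Complex.ext <;> simp <;> ring
  have e6 : b + starRingEnd ℂ b = ((2 * b.re : ℝ) : ℂ) := by
    apply Complex.ext <;> simp <;> ring
  rw [hahn, e1, e2, e3, e4, e5, e6, Complex.Gamma_ofReal, Complex.Gamma_ofReal,
    Complex.Gamma_ofReal]
  set z1 := Complex.Gamma (a + Complex.I * x)
  set z2 := Complex.Gamma (b + Complex.I * x)
  set w := Complex.Gamma (b + starRingEnd ℂ a)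
  have hnum : ((Real.Gamma (2*(a.re+b.re)) : ℝ) : ℂ) * z1 * z2 * starRingEnd ℂ z1 * starRingEnd ℂ z2
      = ((Real.Gamma (2*(a.re+b.re)) * Complex.normSq z1 * Complex.normSq z2 : ℝ) : ℂ) := by
    push_cast
    rw [← Complex.mul_conj z1, ← Complex.mul_conj z2]
    ring
  have hden : 2 * (π : ℂ) * ((Real.Gamma (2*a.re) : ℝ) : ℂ) * w * starRingEnd ℂ w *
        ((Real.Gamma (2*b.re) : ℝ) : ℂ)
      = ((2 * π * Real.Gamma (2*a.re) * Complex.normSq w * Real.Gamma (2*b.re) : ℝ) : ℂ) := by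
    push_cast
    rw [← Complex.mul_conj w]
    ring
  rw [hnum, hden]
  push_cast
  ring

end HahnW


/-- for `a, b` with positive real parts and `c = conj a`, `d = conj b`,
`φ(·;a,b,c,d)` is a real-valued nonnegative probability density on `ℝ`. -/
theorem hahn_integral_eq_one (a b : ℂ) (ha : 0 < a.re) (hb : 0 < b.re) :
    (∀ x : ℝ, (hahn x a b ((starRingEnd ℂ) a) ((starRingEnd ℂ) b)).im = 0 ∧
        0 ≤ (hahn x a b ((starRingEnd ℂ) a) ((starRingEnd ℂ) b)).re) ∧
    ∫ x : ℝ, hahn x a b ((starRingEnd ℂ) a) ((starRingEnd ℂ) b) = 1 := by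

  constructor
  · intro x
    rw [HahnW.hahn_eq_real a b ha hb x]
    refine ⟨Complex.ofReal_im _, ?_⟩
    rw [Complex.ofReal_re]
    have h1 := Real.Gamma_pos_of_pos (show (0:ℝ) < 2 * (a.re + b.re) by linarith)
    have h2 := Real.Gamma_pos_of_pos (show (0:ℝ) < 2 * a.re by linarith)
    have h3 := Real.Gamma_pos_of_pos (show (0:ℝ) < 2 * b.re by linarith)
    have h4 := Real.pi_pos
    have n1 := Complex.normSq_nonneg (Complex.Gamma (a + Complex.I * x))
    have n2 := Complex.normSq_nonneg (Complex.Gamma (b + Complex.I * x))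
    have n3 := Complex.normSq_nonneg (Complex.Gamma (b + starRingEnd ℂ a))
    apply div_nonneg
    · exact mul_nonneg (mul_nonneg h1.le n1) n2
    · exact mul_nonneg (mul_nonneg (mul_nonneg (by positivity) h2.le) n3) h3.le
  · -- the integral computation
    have ha' : 0 < ((starRingEnd ℂ) a).re := by simpa using ha
    have hb' : 0 < ((starRingEnd ℂ) b).re := by simpa using hb
    set S : ℂ := a + b + starRingEnd ℂ a + starRingEnd ℂ b with hS
    set D : ℂ := 2 * (π : ℂ) * Complex.Gamma (a + starRingEnd ℂ a) *
        Complex.Gamma (b + starRingEnd ℂ a) * Complex.Gamma (a + starRingEnd ℂ b) *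
        Complex.Gamma (b + starRingEnd ℂ b) with hD
    have hpt : ∀ x : ℝ, hahn x a b ((starRingEnd ℂ) a) ((starRingEnd ℂ) b)
        = (Complex.Gamma S / D) *
          ((Complex.Gamma (a + Complex.I * x) * Complex.Gamma (starRingEnd ℂ a - Complex.I * x)) *
            (Complex.Gamma (b + Complex.I * x) * Complex.Gamma (starRingEnd ℂ b - Complex.I * x))) := by
      intro x
      rw [hahn, hS, hD]
      ring
    rw [integral_congr_ae (Filter.Eventually.of_forall hpt), integral_const_mul,
      HahnW.integral_gamma_prod a b ha hb]
    -- now pure Gamma algebra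
    have hSS : Complex.Gamma (a + starRingEnd ℂ b + (starRingEnd ℂ a + b)) = Complex.Gamma S := by
      rw [hS]; ring_nf
    have hcomm : Complex.Gamma (starRingEnd ℂ a + b) = Complex.Gamma (b + starRingEnd ℂ a) := by
      rw [add_comm]
    have hre : ∀ z w : ℂ, 0 < z.re → 0 < w.re → 0 < (z + w).re := by
      intro z w h1 h2; rw [Complex.add_re]; linarith
    have g1 : Complex.Gamma (a + starRingEnd ℂ a) ≠ 0 :=
      HahnW.Gamma_ne_zero_of_re_pos (hre _ _ ha ha')
    have g2 : Complex.Gamma (b + starRingEnd ℂ b) ≠ 0 :=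
      HahnW.Gamma_ne_zero_of_re_pos (hre _ _ hb hb')
    have g3 : Complex.Gamma (b + starRingEnd ℂ a) ≠ 0 :=
      HahnW.Gamma_ne_zero_of_re_pos (hre _ _ hb ha')
    have g4 : Complex.Gamma (a + starRingEnd ℂ b) ≠ 0 :=
      HahnW.Gamma_ne_zero_of_re_pos (hre _ _ ha hb')
    have gS : Complex.Gamma S ≠ 0 := by
      apply HahnW.Gamma_ne_zero_of_re_pos
      rw [hS]
      simp [Complex.add_re]
      linarith
    have hπ : (π : ℂ) ≠ 0 := by
      exact_mod_cast Real.pi_ne_zero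
    rw [hSS, hcomm]
    field_simp [hD]
    have hden : 2 * (π:ℂ) * Complex.Gamma (a + starRingEnd ℂ a) *
        Complex.Gamma (b + starRingEnd ℂ a) * Complex.Gamma (a + starRingEnd ℂ b) *
        Complex.Gamma (b + starRingEnd ℂ b) * Complex.Gamma S ≠ 0 :=
      mul_ne_zero (mul_ne_zero (mul_ne_zero (mul_ne_zero (mul_ne_zero
        (mul_ne_zero two_ne_zero hπ) g1) g3) g4) g2) gS
    rw [hD, div_eq_iff (mul_ne_zero (mul_ne_zero (mul_ne_zero (mul_ne_zero two_ne_zero hπ) g1) g3) g4 |> fun h => mul_ne_zero h g2), one_mul]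
    ring
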